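/- Let k ∈ {−1,0,1}, ε, n ∈ {0,1} with εn = εk = 0, and let a, b : ℝ → (0,∞) be C¹. Then the vector field η₄ with components (η₄⁰, η₄¹, η₄², η₄³) = e^{εz}(0, cos φ, −f(r) sin φ, −g(r) sin φ) in coordinates (t,r,φ,z) is a Killing vector field of the metric G on U = {(t,r,φ,z) : Σ(r,k) > 0}, i.e. for all indices α, β ∈ {0,1,2,3} and all points of U: Σ_μ (η₄^μ ∂_μ G_{αβ} + G_{μβ} ∂_α η₄^μ + G_{αμ} ∂_β η₄^μ) = 0. -/

import Mathlib

/-!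
In matrix form the Killing equation reads `Σ_μ η^μ ∂_μ G + Jᵀ G + G J = 0`, where
`J^μ_α = ∂_α η^μ`. The metric depends on `(t, r)` only and `η⁰ = 0`, so the first term is
`η¹ ∂_r G`. Every partial derivative is a one-variable derivative along a coordinate line; the
only non-obvious ones are `f' = -1/Σ²`, which comes from `Σ_{,r}² + kΣ² = 1`, and
`g' = n(F + k)/Σ²`. Each entry of the Killing equation is then a rational identity, which holds
for `ε = 0`, and for `ε ≠ 0` because then `n = k = 0`, i.e. `Σ = r`.
-/

/-- `Σ(y,k)`: `sin y` for `k = 1`, `y` for `k = 0`, `sinh y` for `k = −1`. -/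
noncomputable def Sig (k y : ℝ) : ℝ :=
  if k = 1 then Real.sin y else if k = 0 then y else Real.sinh y

/-- `Σ_{,y}(y,k)`: `cos y` for `k = 1`, `1` for `k = 0`, `cosh y` for `k = −1`. -/
noncomputable def Sigr (k y : ℝ) : ℝ :=
  if k = 1 then Real.cos y else if k = 0 then 1 else Real.cosh y

/-- `F(y,k)`: `−cos y` for `k = 1`, `y²/2` for `k = 0`, `cosh y` for `k = −1`. -/
noncomputable def Ffun (k y : ℝ) : ℝ :=
  if k = 1 then -Real.cos y else if k = 0 then y ^ 2 / 2 else Real.cosh y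

/-- `f(r) = Σ_{,r}(r,k)/Σ(r,k)`. -/
noncomputable def ffun (k r : ℝ) : ℝ := Sigr k r / Sig k r

/-- `g(r) = n(Σ(r,k) − f(r)(F(r,k)+k))`. -/
noncomputable def gfun (k n r : ℝ) : ℝ :=
  n * (Sig k r - ffun k r * (Ffun k r + k))

/-- Coefficient matrix of the cylindrical LRS line element
`−dt² + a²(dz + n(F(r,k)+k)dφ)² + b²[(dr − εr dz)² + Σ(r,k)²dφ²]` in coordinates
`(t,r,φ,z) = (q 0, q 1, q 2, q 3)`. -/
noncomputable def gcyl (k ε n : ℝ) (a b : ℝ → ℝ) (q : Fin 4 → ℝ) :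
    Matrix (Fin 4) (Fin 4) ℝ :=
  !![-1, 0, 0, 0;
     0, (b (q 0)) ^ 2, 0, -ε * q 1 * (b (q 0)) ^ 2;
     0, 0, (a (q 0)) ^ 2 * (n * (Ffun k (q 1) + k)) ^ 2 +
       (b (q 0)) ^ 2 * (Sig k (q 1)) ^ 2,
       (a (q 0)) ^ 2 * n * (Ffun k (q 1) + k);
     0, -ε * q 1 * (b (q 0)) ^ 2, (a (q 0)) ^ 2 * n * (Ffun k (q 1) + k),
       (a (q 0)) ^ 2 + ε ^ 2 * (q 1) ^ 2 * (b (q 0)) ^ 2]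

/-- A vector field `X` is a Killing vector field of the metric components `G` at the
point `q` if `Σ_μ (X^μ ∂_μ G_{αβ} + G_{μβ} ∂_α X^μ + G_{αμ} ∂_β X^μ) = 0` for all
`α, β`, where `∂_μ` is the partial derivative in the `μ`-th coordinate direction. -/
def IsKillingAt (G : (Fin 4 → ℝ) → Matrix (Fin 4) (Fin 4) ℝ)
    (X : (Fin 4 → ℝ) → (Fin 4 → ℝ)) (q : Fin 4 → ℝ) : Prop :=
  ∀ α β : Fin 4,
    (∑ μ : Fin 4,
      (X q μ * fderiv ℝ (fun p => G p α β) q (Pi.single μ 1) +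
        G q μ β * fderiv ℝ (fun p => X p μ) q (Pi.single α 1) +
        G q α μ * fderiv ℝ (fun p => X p μ) q (Pi.single β 1))) = 0

/-- The vector field `η₄ = e^{εz}[cos φ ∂_r − sin φ(f(r)∂_φ + g(r)∂_z)]` in coordinates
`(t,r,φ,z)`. -/
noncomputable def eta4 (k ε n : ℝ) (q : Fin 4 → ℝ) : Fin 4 → ℝ :=
  ![0, Real.exp (ε * q 3) * Real.cos (q 2),
    -(Real.exp (ε * q 3) * ffun k (q 1) * Real.sin (q 2)),
    -(Real.exp (ε * q 3) * gfun k n (q 1) * Real.sin (q 2))]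

open scoped Matrix

lemma hasDerivAt_Sig (k r : ℝ) : HasDerivAt (Sig k) (Sigr k r) r := by
  unfold Sig Sigr
  split_ifs
  exacts [Real.hasDerivAt_sin r, hasDerivAt_id r, Real.hasDerivAt_sinh r]

lemma hasDerivAt_Ffun (k r : ℝ) : HasDerivAt (Ffun k) (Sig k r) r := by
  unfold Ffun Sig
  split_ifs
  · simpa using (Real.hasDerivAt_cos r).fun_neg
  · simpa using (hasDerivAt_pow 2 r).div_const 2
  · exact Real.hasDerivAt_cosh r

@[fun_prop]
lemma differentiable_Sig (k : ℝ) : Differentiable ℝ (Sig k) :=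
  fun r => (hasDerivAt_Sig k r).differentiableAt

@[fun_prop]
lemma differentiable_Ffun (k : ℝ) : Differentiable ℝ (Ffun k) :=
  fun r => (hasDerivAt_Ffun k r).differentiableAt

section Curvature

variable {k : ℝ}

lemma hasDerivAt_Sigr (hk : k = -1 ∨ k = 0 ∨ k = 1) (r : ℝ) :
    HasDerivAt (Sigr k) (-(k * Sig k r)) r := by
  unfold Sigr Sig
  split_ifs with h1 h0
  · simpa [h1] using Real.hasDerivAt_cos r
  · simpa [h0] using hasDerivAt_const r (1 : ℝ)
  · obtain rfl : k = -1 := by tauto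
    simpa using Real.hasDerivAt_cosh r

lemma Sigr_sq_add_mul_Sig_sq (hk : k = -1 ∨ k = 0 ∨ k = 1) (r : ℝ) :
    Sigr k r ^ 2 + k * Sig k r ^ 2 = 1 := by
  rcases hk with rfl | rfl | rfl <;> simp only [Sig, Sigr] <;> norm_num
  linarith [Real.cosh_sq_sub_sinh_sq r]

lemma hasDerivAt_ffun (hk : k = -1 ∨ k = 0 ∨ k = 1) {r : ℝ} (hr : Sig k r ≠ 0) :
    HasDerivAt (ffun k) (-1 / Sig k r ^ 2) r := by
  refine ((hasDerivAt_Sigr hk r).div (hasDerivAt_Sig k r) hr).congr_deriv ?_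
  rw [← Sigr_sq_add_mul_Sig_sq hk r]
  ring

lemma hasDerivAt_gfun (hk : k = -1 ∨ k = 0 ∨ k = 1) (n : ℝ) {r : ℝ} (hr : Sig k r ≠ 0) :
    HasDerivAt (gfun k n) (n * (Ffun k r + k) / Sig k r ^ 2) r := by
  refine (((hasDerivAt_Sig k r).sub ((hasDerivAt_ffun hk hr).mul
    ((hasDerivAt_Ffun k r).add_const k))).const_mul n).congr_deriv ?_
  simp only [ffun]
  field_simp
  ring

end Curvature

section CoordinatePartials

variable {ι : Type*} [Fintype ι] [DecidableEq ι] {F : (ι → ℝ) → ℝ} {q : ι → ℝ} {i : ι}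

lemma fderiv_apply_single_of_hasDerivAt_update {d : ℝ} (hF : DifferentiableAt ℝ F q)
    (h : HasDerivAt (fun s => F (Function.update q i s)) d (q i)) :
    fderiv ℝ F q (Pi.single i 1) = d := by
  have hF' : HasFDerivAt F (fderiv ℝ F q) (Function.update q i (q i)) := by
    simpa using hF.hasFDerivAt
  exact (hF'.comp_hasDerivAt (q i) (hasDerivAt_update q i (q i))).unique h

lemma fderiv_apply_single_eq_zero_of_update (h : ∀ s, F (Function.update q i s) = F q) :
    fderiv ℝ F q (Pi.single i 1) = 0 := by
  by_cases hF : DifferentiableAt ℝ F q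
  · refine fderiv_apply_single_of_hasDerivAt_update hF ?_
    simpa only [h] using hasDerivAt_const (q i) (F q)
  · simp [fderiv_zero_of_not_differentiableAt hF]

end CoordinatePartials

section KillingEquation

variable {G : (Fin 4 → ℝ) → Matrix (Fin 4) (Fin 4) ℝ} {X : (Fin 4 → ℝ) → Fin 4 → ℝ}
  {q : Fin 4 → ℝ}

noncomputable def partialDerivMatrix (G : (Fin 4 → ℝ) → Matrix (Fin 4) (Fin 4) ℝ)
    (q : Fin 4 → ℝ) (μ : Fin 4) : Matrix (Fin 4) (Fin 4) ℝ :=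
  Matrix.of fun α β => fderiv ℝ (fun p => G p α β) q (Pi.single μ 1)

noncomputable def jacobian (X : (Fin 4 → ℝ) → Fin 4 → ℝ) (q : Fin 4 → ℝ) :
    Matrix (Fin 4) (Fin 4) ℝ :=
  Matrix.of fun μ α => fderiv ℝ (fun p => X p μ) q (Pi.single α 1)

lemma isKillingAt_iff : IsKillingAt G X q ↔
    ∑ μ, X q μ • partialDerivMatrix G q μ + (jacobian X q)ᵀ * G q + G q * jacobian X q = 0 := by
  simp only [IsKillingAt, ← Matrix.ext_iff, Matrix.add_apply, Matrix.sum_apply,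
    Matrix.smul_apply, Matrix.mul_apply, Matrix.transpose_apply, partialDerivMatrix, jacobian,
    Matrix.of_apply, Matrix.zero_apply, smul_eq_mul, ← Finset.sum_add_distrib]
  simp only [mul_comm]

end KillingEquation

section Metric

variable {k ε n : ℝ} {a b : ℝ → ℝ}

noncomputable def gcylDerivR (k ε n : ℝ) (a b : ℝ → ℝ) (t r : ℝ) : Matrix (Fin 4) (Fin 4) ℝ :=
  !![0, 0, 0, 0;
     0, 0, 0, -ε * b t ^ 2;
     0, 0, 2 * a t ^ 2 * n ^ 2 * (Ffun k r + k) * Sig k r + 2 * b t ^ 2 * Sig k r * Sigr k r,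
       a t ^ 2 * n * Sig k r;
     0, -ε * b t ^ 2, a t ^ 2 * n * Sig k r, 2 * ε ^ 2 * r * b t ^ 2]

lemma partialDerivMatrix_gcyl_one (ha : Differentiable ℝ a) (hb : Differentiable ℝ b)
    (q : Fin 4 → ℝ) :
    partialDerivMatrix (gcyl k ε n a b) q 1 = gcylDerivR k ε n a b (q 0) (q 1) := by
  set A := a (q 0) ^ 2
  set B := b (q 0) ^ 2
  have hFk := (hasDerivAt_Ffun k (q 1)).add_const k
  have h13 : HasDerivAt (fun r => -(ε * r * B)) (-(ε * B)) (q 1) := by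
    simpa using (((hasDerivAt_id _).const_mul ε).mul_const B).fun_neg
  have h22 : HasDerivAt (fun r => A * (n * (Ffun k r + k)) ^ 2 + B * Sig k r ^ 2)
      (2 * A * n ^ 2 * (Ffun k (q 1) + k) * Sig k (q 1) + 2 * B * Sig k (q 1) * Sigr k (q 1))
      (q 1) := by
    refine ((((hFk.const_mul n).fun_pow 2).const_mul A).fun_add
      (((hasDerivAt_Sig k _).fun_pow 2).const_mul B)).congr_deriv ?_
    ring
  have h23 : HasDerivAt (fun r => A * n * (Ffun k r + k)) (A * n * Sig k (q 1)) (q 1) :=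
    hFk.const_mul _
  have h33 : HasDerivAt (fun r => ε ^ 2 * r ^ 2 * B) (2 * ε ^ 2 * q 1 * B) (q 1) := by
    refine (((hasDerivAt_pow 2 (q 1)).const_mul (ε ^ 2)).mul_const B).congr_deriv ?_
    ring
  ext α β
  refine fderiv_apply_single_of_hasDerivAt_update
    (by fin_cases α <;> fin_cases β <;> simp [gcyl] <;> fun_prop) ?_
  fin_cases α <;> fin_cases β <;> simp [gcyl, gcylDerivR]
  all_goals first | exact hasDerivAt_const _ _ | assumption

lemma partialDerivMatrix_gcyl_of_two_le (q : Fin 4 → ℝ) {μ : Fin 4} (hμ : 2 ≤ μ) :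
    partialDerivMatrix (gcyl k ε n a b) q μ = 0 := by
  have h0 : μ ≠ 0 := by rintro rfl; simp at hμ
  have h1 : μ ≠ 1 := by rintro rfl; simp at hμ
  ext α β
  refine fderiv_apply_single_eq_zero_of_update fun s => ?_
  simp [gcyl, Function.update_of_ne h0.symm, Function.update_of_ne h1.symm]

end Metric

section VectorField

variable {k ε n : ℝ}

noncomputable def eta4Jacobian (k ε n : ℝ) (q : Fin 4 → ℝ) : Matrix (Fin 4) (Fin 4) ℝ :=
  let E := Real.exp (ε * q 3)
  let S := Sig k (q 1)
  !![0, 0, 0, 0;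
     0, 0, -E * Real.sin (q 2), ε * E * Real.cos (q 2);
     0, E * Real.sin (q 2) / S ^ 2, -E * ffun k (q 1) * Real.cos (q 2),
       -ε * E * ffun k (q 1) * Real.sin (q 2);
     0, -E * n * (Ffun k (q 1) + k) * Real.sin (q 2) / S ^ 2,
       -E * gfun k n (q 1) * Real.cos (q 2), -ε * E * gfun k n (q 1) * Real.sin (q 2)]

lemma jacobian_eta4 (hk : k = -1 ∨ k = 0 ∨ k = 1) {q : Fin 4 → ℝ} (hq : Sig k (q 1) ≠ 0) :
    jacobian (eta4 k ε n) q = eta4Jacobian k ε n q := by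
  have hf := hasDerivAt_ffun hk hq
  have hg := hasDerivAt_gfun hk n hq
  have hf' := hf.differentiableAt
  have hg' := hg.differentiableAt
  have hE : HasDerivAt (fun z => Real.exp (ε * z)) (ε * Real.exp (ε * q 3)) (q 3) := by
    simpa [mul_comm] using ((hasDerivAt_id (q 3)).const_mul ε).exp
  ext μ α
  refine fderiv_apply_single_of_hasDerivAt_update
    (by fin_cases μ <;> simp [eta4] <;> fun_prop) ?_
  fin_cases μ <;> fin_cases α <;> simp [eta4, eta4Jacobian]
  all_goals first
    | exact hasDerivAt_const _ _
    | exact ((Real.hasDerivAt_cos _).const_mul _).congr_deriv (by ring)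
    | exact ((Real.hasDerivAt_sin _).const_mul _).fun_neg.congr_deriv (by ring)
    | exact (hE.mul_const _).congr_deriv (by ring)
    | exact ((hE.mul_const _).mul_const _).fun_neg.congr_deriv (by ring)
    | exact ((hf.const_mul _).mul_const _).fun_neg.congr_deriv (by ring)
    | exact ((hg.const_mul _).mul_const _).fun_neg.congr_deriv (by ring)

end VectorField

lemma killing_equation_gcyl_eta4 {k ε n : ℝ} (a b : ℝ → ℝ) (hεn : ε * n = 0) (hεk : ε * k = 0)
    {q : Fin 4 → ℝ} (hq : Sig k (q 1) ≠ 0) :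
    eta4 k ε n q 1 • gcylDerivR k ε n a b (q 0) (q 1) + (eta4Jacobian k ε n q)ᵀ * gcyl k ε n a b q
      + gcyl k ε n a b q * eta4Jacobian k ε n q = 0 := by
  obtain rfl | ⟨rfl, rfl⟩ : ε = 0 ∨ n = 0 ∧ k = 0 := (eq_or_ne ε 0).imp_right fun hε =>
    ⟨(mul_eq_zero.1 hεn).resolve_left hε, (mul_eq_zero.1 hεk).resolve_left hε⟩
  · ext α β
    fin_cases α <;> fin_cases β <;>
      simp [Matrix.mul_apply, Fin.sum_univ_four, gcyl, gcylDerivR, eta4, eta4Jacobian, ffun,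
        gfun] <;>
      field_simp <;> ring
  · have hr : q 1 ≠ 0 := by simpa [Sig] using hq
    ext α β
    fin_cases α <;> fin_cases β <;>
      simp [Matrix.mul_apply, Fin.sum_univ_four, gcyl, gcylDerivR, eta4, eta4Jacobian, ffun,
        gfun, Sig, Sigr] <;>
      field_simp <;> ring

theorem eta4_is_killing_general (k ε n : ℝ)
    (hk : k = -1 ∨ k = 0 ∨ k = 1)
    (hεn : ε * n = 0) (hεk : ε * k = 0)
    (a b : ℝ → ℝ) (ha : ContDiff ℝ 1 a) (hb : ContDiff ℝ 1 b) :
    ∀ q : Fin 4 → ℝ, 0 < Sig k (q 1) →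
      IsKillingAt (gcyl k ε n a b) (eta4 k ε n) q := by
  intro q hq
  rw [isKillingAt_iff, Fin.sum_univ_four,
    partialDerivMatrix_gcyl_one (ha.differentiable one_ne_zero) (hb.differentiable one_ne_zero),
    partialDerivMatrix_gcyl_of_two_le q (μ := 2) le_rfl,
    partialDerivMatrix_gcyl_of_two_le q (μ := 3) (by decide), jacobian_eta4 hk hq.ne']
  simpa [eta4] using killing_equation_gcyl_eta4 a b hεn hεk hq.ne'

/-- `η₄` is a Killing vector field of the LRS metric `gcyl` on the region
`U = {Σ(r,k) > 0}`. -/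
theorem eta4_is_killing (k ε n : ℝ)
    (hk : k = -1 ∨ k = 0 ∨ k = 1) (hε : ε = 0 ∨ ε = 1) (hn : n = 0 ∨ n = 1)
    (hεn : ε * n = 0) (hεk : ε * k = 0)
    (a b : ℝ → ℝ) (ha : ContDiff ℝ 1 a) (hb : ContDiff ℝ 1 b)
    (hapos : ∀ t, 0 < a t) (hbpos : ∀ t, 0 < b t) :
    ∀ q : Fin 4 → ℝ, 0 < Sig k (q 1) →
      IsKillingAt (gcyl k ε n a b) (eta4 k ε n) q :=
  eta4_is_killing_general k ε n hk hεn hεk a b ha hb
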